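/- The product of the ten even genus-2 theta constants vanishes on the locus of diagonal period matrices: for all τ1, τ2 in the complex upper half-plane ℍ, Π_{(μ,ν) even} θ[μ,ν]( diag(τ1,τ2) ) = 0, where the product is over the ten pairs (μ,ν) with μ, ν ∈ {0,1/2}² and 4*(μ1*ν1 + μ2*ν2) even, and diag(τ1,τ2) is the symmetric matrix with diagonal entries τ1, τ2 and off-diagonal entries 0. (This is the statement that the Siegel cusp form χ5 of weight 5, defined up to normalization as the product of the ten even theta constants, vanishes along the locus 𝔄_{1,1} of products of elliptic curves.) -/
import Mathlib


open Complex Real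

/-- The genus-2 theta constant with characteristic `μ = (μ1,μ2)`, `ν = (ν1,ν2)` at the point
`(τ1, τ12; τ12, τ2)` of the Siegel upper half-space of degree 2:
`θ[μ,ν](τ) = Σ_{n∈ℤ²} exp( πi(n+μ)ᵀτ(n+μ) + 2πi(n+μ)ᵀν )`. -/
noncomputable def theta2 (μ1 μ2 ν1 ν2 : ℝ) (τ1 τ12 τ2 : ℂ) : ℂ :=
  ∑' n : ℤ × ℤ, Complex.exp
    (π * I * (((n.1 : ℂ) + μ1) ^ 2 * τ1 + 2 * ((n.1 : ℂ) + μ1) * ((n.2 : ℂ) + μ2) * τ12 +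
        ((n.2 : ℂ) + μ2) ^ 2 * τ2) +
      2 * π * I * (((n.1 : ℂ) + μ1) * ν1 + ((n.2 : ℂ) + μ2) * ν2))

/-- The even characteristics in genus 2, encoded by bits: `(μ,ν) = ((b1/2,b2/2),(c1/2,c2/2))`
with `b1,b2,c1,c2 ∈ {0,1}` is even iff `4(μ1ν1 + μ2ν2) = b1c1 + b2c2` is even.
There are exactly ten of them. -/
def evenChars : Finset ((Fin 2 × Fin 2) × (Fin 2 × Fin 2)) :=
  Finset.univ.filter fun x =>
    Even ((x.1.1 : ℕ) * (x.2.1 : ℕ) + (x.1.2 : ℕ) * (x.2.2 : ℕ))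

/-- The sign-reversing involution `n₁ ↦ -1 - n₁` on the first coordinate. -/
def flipFst : ℤ × ℤ ≃ ℤ × ℤ where
  toFun n := (-1 - n.1, n.2)
  invFun n := (-1 - n.1, n.2)
  left_inv n := by simp
  right_inv n := by simp

/-- The exponent of the summand of the theta constant with the odd-odd characteristic
`μ = ν = (1/2, 1/2)` at the diagonal point `diag(τ1, τ2)`. -/
noncomputable def Aarg (τ1 τ2 : ℂ) (n : ℤ × ℤ) : ℂ :=
  π * I * (((n.1 : ℂ) + ((1:ℝ)/2 : ℝ)) ^ 2 * τ1 +
      2 * ((n.1 : ℂ) + ((1:ℝ)/2 : ℝ)) * ((n.2 : ℂ) + ((1:ℝ)/2 : ℝ)) * 0 +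
      ((n.2 : ℂ) + ((1:ℝ)/2 : ℝ)) ^ 2 * τ2) +
    2 * π * I * (((n.1 : ℂ) + ((1:ℝ)/2 : ℝ)) * ((1:ℝ)/2 : ℝ) +
      ((n.2 : ℂ) + ((1:ℝ)/2 : ℝ)) * ((1:ℝ)/2 : ℝ))

lemma Aarg_flip (τ1 τ2 : ℂ) (n : ℤ × ℤ) :
    Aarg τ1 τ2 (flipFst n) = Aarg τ1 τ2 n + (2 * n.1 + 1) * (-(π * I)) := by
  obtain ⟨n1, n2⟩ := n
  simp only [Aarg, flipFst, Equiv.coe_fn_mk]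
  push_cast
  ring

lemma exp_flip (τ1 τ2 : ℂ) (n : ℤ × ℤ) :
    Complex.exp (Aarg τ1 τ2 (flipFst n)) = - Complex.exp (Aarg τ1 τ2 n) := by
  rw [Aarg_flip, Complex.exp_add]
  have hc : ((2 * n.1 + 1 : ℂ)) = ((2 * n.1 + 1 : ℤ) : ℂ) := by push_cast; ring
  rw [hc, Complex.exp_int_mul, Complex.exp_neg, Complex.exp_pi_mul_I]
  have h : ((-1 : ℂ))⁻¹ = -1 := by norm_num
  rw [h, Odd.neg_one_zpow ⟨n.1, by ring⟩]
  ring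

/-- The theta constant with the odd-odd characteristic vanishes on the diagonal:
the involution `n₁ ↦ -1 - n₁` negates each summand. -/
lemma theta_oddodd_zero (τ1 τ2 : ℂ) :
    theta2 (1/2) (1/2) (1/2) (1/2) τ1 0 τ2 = 0 := by
  have h2 : theta2 (1/2) (1/2) (1/2) (1/2) τ1 0 τ2 = ∑' n, Complex.exp (Aarg τ1 τ2 n) := by
    rw [theta2]
    congr 1
  have h3 : (∑' n, Complex.exp (Aarg τ1 τ2 n)) = - ∑' n, Complex.exp (Aarg τ1 τ2 n) := by
    conv_lhs => rw [← flipFst.tsum_eq (fun n => Complex.exp (Aarg τ1 τ2 n))]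
    simp_rw [exp_flip]
    exact tsum_neg
  rw [h2]
  linear_combination h3 / 2

/-- The product of the ten even genus-2 theta constants (the Siegel cusp form `χ5`, up to
normalization) vanishes on the locus of diagonal period matrices `diag(τ1,τ2)`. -/
theorem chi5_vanishes_on_diagonal (τ1 τ2 : ℂ) (h1 : 0 < τ1.im) (h2 : 0 < τ2.im) :
    (∏ x ∈ evenChars,
      theta2 (((x.1.1 : ℕ) : ℝ) / 2) (((x.1.2 : ℕ) : ℝ) / 2)
        (((x.2.1 : ℕ) : ℝ) / 2) (((x.2.2 : ℕ) : ℝ) / 2) τ1 0 τ2) = 0 := by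
  apply Finset.prod_eq_zero (i := (((1 : Fin 2), (1 : Fin 2)), ((1 : Fin 2), (1 : Fin 2))))
  · decide
  · norm_num
    exact theta_oddodd_zero τ1 τ2
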